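/- arXiv:0803.3913 — 8 statements merged into one kernel-verified Lean document; each statement's English description precedes it below -/
import Mathlib

section
/- Let M ≥ 1 and let A be the inverse of the M×M Vandermonde matrix V with V_{j,n} = j^(n-1) for j,n ∈ {1,…,M}. Then the first row of A is given by A_{1,n} = (-1)^(1+n) * C(M,n) for n = 1,…,M, where C(M,n) is the binomial coefficient. -/
open fwdDiff Matrix

/-- The `M`-th forward difference of `m ↦ m^j` vanishes when `j < M`. -/
lemma fwdDiff_iter_pow_eq_zero : ∀ j M : ℕ, j < M →
    (Δ_[(1:ℕ)])^[M] (fun m : ℕ => (m : ℚ) ^ j) = 0 := by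
  intro j
  induction j using Nat.strong_induction_on with
  | _ j IH =>
    intro M hM
    obtain ⟨M, rfl⟩ : ∃ M', M = M' + 1 := ⟨M - 1, by omega⟩
    have hd : Δ_[(1:ℕ)] (fun m : ℕ => (m : ℚ) ^ j)
        = ∑ i ∈ Finset.range j, (j.choose i : ℚ) • (fun m : ℕ => (m : ℚ) ^ i) := by
      funext m
      simp only [fwdDiff, Finset.sum_apply, Pi.smul_apply, smul_eq_mul]
      push_cast
      rw [add_pow, Finset.sum_range_succ]
      simp [mul_comm]
    rw [Function.iterate_succ_apply, hd, fwdDiff_iter_finset_sum]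
    refine Finset.sum_eq_zero fun i hi => ?_
    have hij := Finset.mem_range.mp hi
    rw [fwdDiff_iter_const_smul, IH i hij M (by omega)]
    simp

lemma key_sum (M j : ℕ) (hj : j < M) :
    ∑ n ∈ Finset.range M, (-1 : ℚ) ^ n * (M.choose (n + 1)) * ((n : ℚ) + 1) ^ j
      = (0 : ℚ) ^ j := by
  have h0 := fwdDiff_iter_pow_eq_zero j M hj
  have h1 := fwdDiff_iter_eq_sum_shift (1 : ℕ) (fun m : ℕ => (m : ℚ) ^ j) M 0
  rw [h0] at h1
  simp only [Pi.zero_apply, zsmul_eq_mul, zero_add, smul_eq_mul] at h1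
  rw [Finset.sum_range_succ'] at h1
  push_cast at h1
  have hsq : ∀ n : ℕ, ((-1 : ℚ)) ^ n * (-1) ^ n = 1 := by
    intro n; rw [← pow_add]; exact Even.neg_one_pow ⟨n, rfl⟩
  have hsign : ∀ n, n < M →
      ((-1 : ℚ)) ^ (M - (n + 1)) = (-1) ^ M * (-1) ^ (n + 1) := by
    intro n hn
    have hMn : M - (n + 1) + (n + 1) = M := by omega
    calc ((-1 : ℚ)) ^ (M - (n + 1))
        = (-1) ^ (M - (n + 1)) * ((-1) ^ (n + 1) * (-1) ^ (n + 1)) := by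
          rw [hsq]; ring
      _ = (-1) ^ M * (-1) ^ (n + 1) := by rw [← mul_assoc, ← pow_add, hMn]
  have hM0 : ((-1 : ℚ)) ^ M ≠ 0 := by
    intro h; exact absurd (pow_eq_zero_iff'.mp h).1 (by norm_num)
  have h1' : (0 : ℚ) = (-1 : ℚ) ^ M *
      ((∑ n ∈ Finset.range M,
        (-1 : ℚ) ^ (n + 1) * (M.choose (n + 1)) * ((n : ℚ) + 1) ^ j)
        + (M.choose 0 : ℚ) * (0 : ℚ) ^ j) := by
    conv_lhs => rw [h1]
    rw [mul_add, Finset.mul_sum]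
    congr 1
    · refine Finset.sum_congr rfl fun n hn => ?_
      rw [hsign n (Finset.mem_range.mp hn)]
      ring
    · rw [Nat.sub_zero]
      ring
  have h2 : (∑ n ∈ Finset.range M,
      (-1 : ℚ) ^ (n + 1) * (M.choose (n + 1)) * ((n : ℚ) + 1) ^ j)
        + (M.choose 0 : ℚ) * (0 : ℚ) ^ j = 0 := by
    have := mul_left_cancel₀ hM0 (show (-1 : ℚ) ^ M *
        ((∑ n ∈ Finset.range M,
          (-1 : ℚ) ^ (n + 1) * (M.choose (n + 1)) * ((n : ℚ) + 1) ^ j)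
          + (M.choose 0 : ℚ) * (0 : ℚ) ^ j) = (-1 : ℚ) ^ M * 0 by
      rw [mul_zero, ← h1'])
    simpa using this
  have h3 : ∑ n ∈ Finset.range M,
      (-1 : ℚ) ^ (n + 1) * (M.choose (n + 1)) * ((n : ℚ) + 1) ^ j
        = -((M.choose 0 : ℚ) * (0 : ℚ) ^ j) := by linarith
  calc ∑ n ∈ Finset.range M, (-1 : ℚ) ^ n * (M.choose (n + 1)) * ((n : ℚ) + 1) ^ j
      = -∑ n ∈ Finset.range M,
          (-1 : ℚ) ^ (n + 1) * (M.choose (n + 1)) * ((n : ℚ) + 1) ^ j := by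
        rw [← Finset.sum_neg_distrib]
        refine Finset.sum_congr rfl fun n _ => ?_
        rw [pow_succ]; ring
    _ = (0 : ℚ) ^ j := by rw [h3]; simp

/-- The first row of the inverse of the Vandermonde matrix `V_{j,n} = j^(n-1)`,
`j, n ∈ {1,…,M}` (indexed here by `Fin M`, so row `j` is index `j-1` and
column `n` is index `n-1`): `A_{1,n} = (-1)^(1+n) * C(M,n)`. -/
theorem inverse_vandermonde_first_row (M : ℕ) (hM : 1 ≤ M) (k : Fin M) :
    (Matrix.of fun j n : Fin M => ((j : ℚ) + 1) ^ (n : ℕ))⁻¹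
        ⟨0, by omega⟩ k =
      (-1 : ℚ) ^ (1 + ((k : ℕ) + 1)) * (M.choose ((k : ℕ) + 1)) := by
  set V : Matrix (Fin M) (Fin M) ℚ :=
    Matrix.of fun j n : Fin M => ((j : ℚ) + 1) ^ (n : ℕ) with hVdef
  have hVv : V = Matrix.vandermonde (fun i : Fin M => (i : ℚ) + 1) := rfl
  have hdet : IsUnit V.det := by
    rw [isUnit_iff_ne_zero, hVv]
    rw [Matrix.det_vandermonde_ne_zero_iff]
    intro a b hab
    simpa [Fin.ext_iff] using hab
  have hx : (fun n : Fin M => (-1 : ℚ) ^ (n : ℕ) * (M.choose ((n : ℕ) + 1))) ᵥ* V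
      = Pi.single ⟨0, by omega⟩ 1 := by
    funext j
    have hsum : ((fun n : Fin M => (-1 : ℚ) ^ (n : ℕ) * (M.choose ((n : ℕ) + 1))) ᵥ* V) j
        = ∑ n ∈ Finset.range M,
            (-1 : ℚ) ^ n * (M.choose (n + 1)) * ((n : ℚ) + 1) ^ (j : ℕ) := by
      rw [Matrix.vecMul, dotProduct]
      rw [← Fin.sum_univ_eq_sum_range
        (fun n => (-1 : ℚ) ^ n * (M.choose (n + 1)) * ((n : ℚ) + 1) ^ (j : ℕ))]
      rfl
    rw [hsum, key_sum M (j : ℕ) j.isLt, Pi.single_apply]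
    by_cases hj : (j : ℕ) = 0
    · rw [hj, pow_zero, if_pos (Fin.ext hj)]
    · rw [zero_pow hj, if_neg (fun h => hj (by rw [h]))]
  have hinv : V * V⁻¹ = 1 := Matrix.mul_nonsing_inv V hdet
  have hrow : V⁻¹ ⟨0, by omega⟩
      = fun n : Fin M => (-1 : ℚ) ^ (n : ℕ) * (M.choose ((n : ℕ) + 1)) := by
    have h1 : ((fun n : Fin M => (-1 : ℚ) ^ (n : ℕ) * (M.choose ((n : ℕ) + 1))) ᵥ* V) ᵥ* V⁻¹
        = fun n : Fin M => (-1 : ℚ) ^ (n : ℕ) * (M.choose ((n : ℕ) + 1)) := by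
      rw [Matrix.vecMul_vecMul, hinv, Matrix.vecMul_one]
    rw [hx, Matrix.single_one_vecMul] at h1
    exact h1
  rw [hrow]
  have hs : (-1 : ℚ) ^ (1 + ((k : ℕ) + 1)) = (-1) ^ (k : ℕ) := by
    rw [show 1 + ((k : ℕ) + 1) = (k : ℕ) + 2 by omega, pow_add]
    norm_num
  rw [hs]
end

section
/- Let M ≥ 1 and let A be the inverse of the M×M Vandermonde matrix V with V_{j,n} = j^(n-1) for j,n ∈ {1,…,M}. Then the last (M-th) row of A is given by A_{M,n} = (-1)^(M+n) / ((n-1)! * (M-n)!) for n = 1,…,M. -/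
/-!
Row `m` of the inverse of the Vandermonde matrix on the nodes `y, y + 1, …, y + m` is the unique
vector `r` with `r ᵥ* V = eₘ`, i.e. `∑ₖ rₖ (k + y)^c = δ_{c,m}` for `c ≤ m`. The `m`-th forward
difference of `x ↦ x^c` at `y` is `∑ₖ (-1)^(m-k) C(m,k) (y + k)^c`, and it equals `m!` for `c = m`
and `0` for `c < m`; hence `rₖ = (-1)^(m-k) C(m,k) / m! = (-1)^(m-k) / (k! (m-k)!)`.
-/

open Finset Matrix Nat

theorem sum_range_alternating_choose_mul_pow {R : Type*} [CommRing R] (y : R) {m c : ℕ}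
    (hc : c ≤ m) :
    ∑ k ∈ range (m + 1), (-1 : R) ^ (m - k) * m.choose k * (k + y) ^ c =
      if c = m then (m ! : R) else 0 := by
  have hshift := fwdDiff_iter_eq_sum_shift (1 : R) (fun x : R => x ^ c) m y
  simp only [zsmul_eq_mul, nsmul_one, Int.cast_mul, Int.cast_pow, Int.cast_neg, Int.cast_one,
    Int.cast_natCast, add_comm y] at hshift
  rw [← hshift]
  rcases hc.lt_or_eq with hlt | rfl
  · rw [fwdDiff_iter_pow_eq_zero_of_lt hlt, if_neg hlt.ne, Pi.zero_apply]
  · rw [fwdDiff_iter_eq_factorial, if_pos rfl, Pi.natCast_apply]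

theorem Matrix.inv_apply_eq_of_vecMul_eq_single {n K : Type*} [Fintype n] [DecidableEq n]
    [CommRing K] {A : Matrix n n K} (hA : IsUnit A.det) {i : n} {r : n → K}
    (h : r ᵥ* A = Pi.single i 1) : A⁻¹ i = r :=
  calc A⁻¹ i = Pi.single i 1 ᵥ* A⁻¹ := (single_one_vecMul i A⁻¹).symm
    _ = r ᵥ* (A * A⁻¹) := by rw [← h, vecMul_vecMul]
    _ = r := by rw [mul_nonsing_inv A hA, vecMul_one]

theorem Matrix.inv_vandermonde_natCast_add_last_apply {K : Type*} [Field K] [CharZero K] (y : K)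
    (m : ℕ) (k : Fin (m + 1)) :
    (vandermonde fun j : Fin (m + 1) => (j : K) + y)⁻¹ (Fin.last m) k =
      (-1) ^ (m - k) / ((k : ℕ)! * (m - k)!) := by
  have hdet : IsUnit (vandermonde fun j : Fin (m + 1) => (j : K) + y).det := by
    refine isUnit_iff_ne_zero.mpr (det_vandermonde_ne_zero_iff.mpr fun a b hab => ?_)
    exact Fin.ext (Nat.cast_injective (add_right_cancel hab))
  have hfact : ∀ n : ℕ, (n ! : K) ≠ 0 := fun n => Nat.cast_ne_zero.mpr n.factorial_ne_zero
  have hrow : (fun k : Fin (m + 1) => (-1 : K) ^ (m - k) * m.choose k / m !) ᵥ*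
      vandermonde (fun j : Fin (m + 1) => (j : K) + y) = Pi.single (Fin.last m) 1 := by
    funext c
    simp only [vecMul, dotProduct, vandermonde_apply, div_mul_eq_mul_div, ← sum_div]
    rw [Fin.sum_univ_eq_sum_range (fun k => (-1 : K) ^ (m - k) * m.choose k * (k + y) ^ (c : ℕ)),
      sum_range_alternating_choose_mul_pow y (Fin.is_le c), Pi.single_apply]
    by_cases hcm : (c : ℕ) = m
    · rw [if_pos hcm, if_pos (Fin.ext hcm), div_self (hfact m)]
    · rw [if_neg hcm, if_neg (fun h => hcm (congrArg Fin.val h)), zero_div]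
  rw [inv_apply_eq_of_vecMul_eq_single hdet hrow]
  simp only [cast_choose K (Fin.is_le k)]
  field_simp [hfact]

/-- The last row of the inverse of the Vandermonde matrix `V_{j,n} = j^(n-1)`,
`j, n ∈ {1,…,M}` (indexed here by `Fin M`): with `n = k+1`,
`A_{M,n} = (-1)^(M+n) / ((n-1)! (M-n)!)`. -/
theorem inverse_vandermonde_last_row (M : ℕ) (hM : 1 ≤ M) (k : Fin M) :
    (Matrix.of fun j n : Fin M => ((j : ℚ) + 1) ^ (n : ℕ))⁻¹
        ⟨M - 1, by omega⟩ k =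
      (-1 : ℚ) ^ (M + ((k : ℕ) + 1)) /
        ((k : ℕ).factorial * (M - ((k : ℕ) + 1)).factorial) := by
  obtain ⟨m, rfl⟩ : ∃ m, M = m + 1 := ⟨M - 1, by omega⟩
  have hsign : (-1 : ℚ) ^ (m + 1 + ((k : ℕ) + 1)) = (-1) ^ (m - k) := by
    rw [show m + 1 + ((k : ℕ) + 1) = (m - k) + 2 * (k + 1) by omega, pow_add, pow_mul]
    norm_num
  rw [hsign, show m + 1 - ((k : ℕ) + 1) = m - k by omega]
  exact inv_vandermonde_natCast_add_last_apply 1 m k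
end

section
/- Let M ≥ 2 and let A be the inverse of the M×M Vandermonde matrix V with V_{j,n} = j^(n-1). Then row M-1 of A satisfies A_{M-1,n} = (-1)^(M+n-1)/((n-1)!(M-n)!) * (M(M+1)/2 - n) for n = 1,…,M. -/
/-!
The columns of `V⁻¹` are the coefficient vectors of the Lagrange basis polynomials
`ℓ_k = ∏_{j ≠ k} (X - j) / (k - j)` for the nodes `1, …, M`, since `V` evaluates a
coefficient vector at the nodes. Row `M - 1` holds the coefficients of `X^(M-2)`, i.e.
minus the sum of the roots of `ℓ_k` divided by `∏_{j ≠ k} (k - j) = (-1)^(M-k) (k-1)! (M-k)!`;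
the sum of the roots is `M(M+1)/2 - k`.
-/

open Finset Polynomial Lagrange Matrix
open scoped Nat

section Interpolation

variable {F : Type*} [Field F]

theorem Lagrange.basis_coeff_card_sub_two {ι : Type*} [DecidableEq ι] {s : Finset ι}
    {v : ι → F} {i : ι} (hi : i ∈ s) (hs : 2 ≤ #s) :
    (Lagrange.basis s v i).coeff (#s - 2) = -(∑ j ∈ s.erase i, v j) * nodalWeight s v i := by
  have hcard : #(s.erase i) = #s - 1 := card_erase_of_mem hi
  rw [basis_eq_prod_sub_inv_mul_nodal_div hi, ← nodal_erase_eq_nodal_div hi, coeff_C_mul,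
    nodal, show #s - 2 = #(s.erase i) - 1 by omega,
    prod_X_sub_C_coeff_card_pred _ _ (by omega), mul_comm]

variable {n : ℕ} {v : Fin n → F}

theorem Matrix.vandermonde_mul_basis_coeff (hv : Function.Injective v) :
    vandermonde v * Matrix.of (fun i l : Fin n => (Lagrange.basis univ v l).coeff i) = 1 := by
  have hvs : Set.InjOn v (univ : Finset (Fin n)) := hv.injOn
  ext j l
  have hdeg : (Lagrange.basis univ v l).natDegree < n := by
    rw [natDegree_basis hvs (mem_univ l), card_univ, Fintype.card_fin]
    exact Nat.sub_lt (Fin.pos l) one_pos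
  trans (Lagrange.basis univ v l).eval (v j)
  · rw [eval_eq_sum_range' hdeg, ← Fin.sum_univ_eq_sum_range, mul_apply]
    simp only [vandermonde_apply, of_apply, mul_comm]
  rcases eq_or_ne j l with rfl | hjl
  · rw [eval_basis_self hvs (mem_univ j), one_apply_eq]
  · rw [eval_basis_of_ne hjl.symm (mem_univ j), one_apply_ne hjl]

theorem Matrix.inv_vandermonde_apply (hv : Function.Injective v) (i l : Fin n) :
    (vandermonde v)⁻¹ i l = (Lagrange.basis univ v l).coeff i := by
  rw [inv_eq_right_inv (vandermonde_mul_basis_coeff hv), of_apply]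

end Interpolation

section Nodes

theorem Finset.prod_range_erase_natCast_sub {R : Type*} [CommRing R] (k m : ℕ) :
    ∏ j ∈ (range (k + m + 1)).erase k, ((k : R) - j) = (-1) ^ m * k ! * m ! := by
  induction m with
  | zero =>
    rw [add_zero, range_add_one, erase_insert notMem_range_self, prod_range_natCast_sub,
      ← Nat.descFactorial_eq_prod_range, Nat.descFactorial_self]
    simp
  | succ m ih =>
    rw [← add_assoc, range_add_one, erase_insert_of_ne (by omega), prod_insert (by simp), ih,
      Nat.factorial_succ]
    push_cast
    ring

theorem sum_fin_natCast_add_one (M : ℕ) : ∑ j : Fin M, ((j : ℚ) + 1) = M * (M + 1) / 2 := by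
  rw [Fin.sum_univ_eq_sum_range (fun j => (j : ℚ) + 1)]
  induction M with
  | zero => simp
  | succ M ih =>
    rw [sum_range_succ, ih]
    push_cast
    ring

theorem nodalWeight_natCast_add_one {M : ℕ} (k : Fin M) :
    nodalWeight univ (fun j : Fin M => (j : ℚ) + 1) k
      = (-1) ^ (M - 1 - k) / (k.val ! * (M - 1 - k)!) := by
  obtain ⟨m, hm⟩ : ∃ m, M = k + m + 1 := ⟨M - k - 1, by omega⟩
  have hmap : (univ.erase k).map Fin.valEmbedding = (range M).erase k := by
    rw [map_erase, Fin.map_valEmbedding_univ, Nat.Iio_eq_range]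
    rfl
  have hprod :
      ∏ j ∈ univ.erase k, (((k : ℚ) + 1) - ((j : ℚ) + 1)) = (-1) ^ m * k.val ! * m ! := by
    rw [← prod_range_erase_natCast_sub, ← hm, ← hmap, prod_map]
    simp
  rw [nodalWeight, prod_inv_distrib, hprod, show M - 1 - k = m by omega, mul_assoc, mul_inv,
    ← inv_pow, inv_neg_one, div_eq_mul_inv]

end Nodes

/-- Row `M-1` of the inverse of the Vandermonde matrix `V_{j,n} = j^(n-1)`,
`j, n ∈ {1,…,M}` (indexed here by `Fin M`): with `n = k+1` (so `M+n-1 = M+k`),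
`A_{M-1,n} = (-1)^(M+n-1)/((n-1)!(M-n)!) * (M(M+1)/2 - n)`. -/
theorem inverse_vandermonde_row_M_sub_one (M : ℕ) (hM : 2 ≤ M) (k : Fin M) :
    (Matrix.of fun j n : Fin M => ((j : ℚ) + 1) ^ (n : ℕ))⁻¹
        ⟨M - 2, by omega⟩ k =
      (-1 : ℚ) ^ (M + (k : ℕ)) /
          ((k : ℕ).factorial * (M - ((k : ℕ) + 1)).factorial) *
        ((M : ℚ) * ((M : ℚ) + 1) / 2 - ((k : ℕ) + 1)) := by
  have hv : Function.Injective fun j : Fin M => (j : ℚ) + 1 := fun a b hab =>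
    Fin.ext (by simpa using hab)
  have hcoeff := basis_coeff_card_sub_two (v := fun j : Fin M => (j : ℚ) + 1) (mem_univ k)
    (by simpa using hM)
  rw [card_univ, Fintype.card_fin] at hcoeff
  rw [← vandermonde, inv_vandermonde_apply hv, hcoeff, sum_erase_eq_sub (mem_univ k),
    sum_fin_natCast_add_one, nodalWeight_natCast_add_one]
  have hsign : (-1 : ℚ) ^ (M + (k : ℕ)) = -(-1) ^ (M - 1 - k) := by
    rw [show M + (k : ℕ) = (M - 1 - k) + 2 * k + 1 by omega, pow_succ, pow_add, pow_mul]
    simp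
  rw [hsign, show M - ((k : ℕ) + 1) = M - 1 - k by omega]
  ring
end

section
/- Let M ≥ 3 and let A be the inverse of the M×M Vandermonde matrix V with V_{j,n} = j^(n-1). Then row M-2 of A satisfies A_{M-2,n} = (-1)^(M+n)/((n-1)!(M-n)!) * ( (M-1)M(M+1)(3M+2)/24 - n·M(M+1)/2 + n^2 ) for n = 1,…,M. -/
/-!
The columns of `V⁻¹` are the coefficient vectors of the Lagrange basis polynomials for the nodes
`1, …, M`; the one for node `n` is `w_n ∏_{j ≠ n} (X - j)` with
`w_n = 1 / ∏_{j ≠ n} (n - j) = (-1)^(M-n) / ((n-1)! (M-n)!)`. The entry in row `M-2` is `w_n`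
times the coefficient of `X^(M-3)` in `∏_{j ≠ n} (X - j)`, which synthetic division of
`(X-1)⋯(X-M)` by `X - n` gives as `e₂ - n e₁ + n²`, where `e₁ = M(M+1)/2` and
`e₂ = (M-1)M(M+1)(3M+2)/24` are the elementary symmetric sums of `1, …, M`, read off from the
two subleading coefficients of `(X-1)⋯(X-M)`.
-/

open Polynomial Finset Nat

namespace Matrix

variable {F : Type*} [Field F] {n : ℕ} {v : Fin n → F}

theorem vandermonde_mul_lagrangeBasis_coeff (hv : Function.Injective v) :
    vandermonde v * of (fun i j : Fin n => (Lagrange.basis univ v j).coeff i) = 1 := by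
  ext i j
  have hdeg : (Lagrange.basis univ v j).natDegree < n := by
    rw [Lagrange.natDegree_basis hv.injOn (mem_univ j), Finset.card_univ, Fintype.card_fin]
    exact Nat.sub_lt_of_pos_le one_pos (Fin.pos j)
  have heval : (vandermonde v * of fun i j : Fin n => (Lagrange.basis univ v j).coeff i) i j =
      (Lagrange.basis univ v j).eval (v i) := by
    rw [mul_apply, eval_eq_sum_range' hdeg,
      ← Fin.sum_univ_eq_sum_range (fun r => (Lagrange.basis univ v j).coeff r * v i ^ r)]
    exact sum_congr rfl fun r _ => mul_comm _ _
  rw [heval]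
  by_cases hij : i = j
  · rw [hij, Lagrange.eval_basis_self hv.injOn (mem_univ j), one_apply_eq]
  · rw [Lagrange.eval_basis_of_ne (Ne.symm hij) (mem_univ i), one_apply_ne hij]

theorem inv_vandermonde_apply_s5 (hv : Function.Injective v) (i j : Fin n) :
    (vandermonde v)⁻¹ i j = (Lagrange.basis univ v j).coeff i := by
  rw [inv_eq_right_inv (vandermonde_mul_lagrangeBasis_coeff hv)]
  rfl

end Matrix

theorem Lagrange.basis_eq_C_nodalWeight_mul_nodal_erase {F ι : Type*} [Field F] [DecidableEq ι]
    {s : Finset ι} {v : ι → F} {i : ι} (hi : i ∈ s) :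
    Lagrange.basis s v i = C (nodalWeight s v i) * nodal (s.erase i) v := by
  rw [basis_eq_prod_sub_inv_mul_nodal_div hi, nodal_erase_eq_nodal_div hi]

theorem Polynomial.coeff_eq_of_eq_mul_X_sub_C {R : Type*} [CommRing R] {p q : R[X]} {r : R}
    (h : p = q * (X - C r)) (a : ℕ) : q.coeff a = p.coeff (a + 1) + q.coeff (a + 1) * r := by
  rw [h, coeff_mul_X_sub_C]
  ring

theorem prod_erase_range_sub (M k : ℕ) (hk : k < M) :
    ∏ j ∈ (range M).erase k, ((k : ℚ) - j) = (-1) ^ (M - (k + 1)) * k ! * (M - (k + 1))! := by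
  obtain ⟨m, rfl⟩ : ∃ m, M = k + 1 + m := ⟨M - (k + 1), by omega⟩
  have hsplit : (range (k + 1 + m)).erase k = range k ∪ Ico (k + 1) (k + 1 + m) := by
    ext j; simp only [mem_erase, mem_range, mem_union, mem_Ico]; omega
  have hdisj : Disjoint (range k) (Ico (k + 1) (k + 1 + m)) := by
    simp only [disjoint_left, mem_range, mem_Ico]; omega
  have hlow : ∏ j ∈ range k, ((k : ℚ) - j) = k ! := by
    rw [← descPochhammer_eval_eq_prod_range, descPochhammer_eval_eq_descFactorial,
      Nat.descFactorial_self]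
  have hhigh : ∏ j ∈ Ico (k + 1) (k + 1 + m), ((k : ℚ) - j) = (-1) ^ m * m ! := by
    rw [prod_Ico_eq_prod_range, Nat.add_sub_cancel_left, ← prod_range_add_one_eq_factorial,
      Nat.cast_prod]
    have hterm : ∀ j ∈ range m, (k : ℚ) - ↑(k + 1 + j) = -1 * ↑(j + 1) := by
      intro j _
      push_cast
      ring
    rw [prod_congr rfl hterm, prod_mul_distrib, prod_const, card_range]
  rw [hsplit, prod_union hdisj, hlow, hhigh, Nat.add_sub_cancel_left]
  ring

noncomputable def natNodal (m : ℕ) : ℚ[X] := ∏ j ∈ range m, (X - C ((j : ℚ) + 1))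

theorem natNodal_succ (m : ℕ) : natNodal (m + 1) = natNodal m * (X - C ((m : ℚ) + 1)) :=
  prod_range_succ _ _

theorem natNodal_coeff_self (m : ℕ) : (natNodal m).coeff m = 1 := by
  have hmonic : (natNodal m).Monic := monic_prod_of_monic _ _ fun j _ => monic_X_sub_C _
  have hdeg : (natNodal m).natDegree = m := by
    rw [natNodal, natDegree_prod_of_monic _ _ fun j _ => monic_X_sub_C _]
    simp only [natDegree_X_sub_C, sum_const, card_range, smul_eq_mul, mul_one]
  simpa only [hdeg] using hmonic.coeff_natDegree

theorem natNodal_coeff_sub_one (m : ℕ) :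
    (natNodal (m + 1)).coeff m = -(((m : ℚ) + 1) * ((m : ℚ) + 2) / 2) := by
  induction m with
  | zero => simp [natNodal]
  | succ m ih =>
    rw [natNodal_succ, coeff_mul_X_sub_C, ih, natNodal_coeff_self]
    push_cast
    ring

theorem natNodal_coeff_sub_two (m : ℕ) :
    (natNodal (m + 2)).coeff m =
      ((m : ℚ) + 1) * ((m : ℚ) + 2) * ((m : ℚ) + 3) * (3 * (m : ℚ) + 8) / 24 := by
  induction m with
  | zero => norm_num [natNodal, prod_range_succ]
  | succ m ih =>
    rw [natNodal_succ, coeff_mul_X_sub_C, ih, natNodal_coeff_sub_one (m + 1)]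
    push_cast
    ring

theorem nodal_fin_add_one (M : ℕ) :
    Lagrange.nodal univ (fun j : Fin M => (j : ℚ) + 1) = natNodal M :=
  Fin.prod_univ_eq_prod_range (fun j => X - C ((j : ℚ) + 1)) M

theorem nodalWeight_fin_add_one (M : ℕ) (k : Fin M) :
    Lagrange.nodalWeight univ (fun j : Fin M => (j : ℚ) + 1) k =
      (-1 : ℚ) ^ (M + ((k : ℕ) + 1)) / ((k : ℕ)! * (M - ((k : ℕ) + 1))!) := by
  have hprod : ∏ j ∈ univ.erase k, (((k : ℕ) : ℚ) + 1 - ((j : ℕ) + 1)) =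
      ∏ j ∈ (range M).erase (k : ℕ), ((k : ℚ) - j) := by
    have hrange : (range M).erase (k : ℕ) = (univ.erase k).map Fin.valEmbedding := by
      rw [map_erase, Fin.map_valEmbedding_univ, Nat.Iio_eq_range]
      rfl
    rw [hrange, prod_map]
    exact prod_congr rfl fun j _ => by simp
  have hsign : (-1 : ℚ) ^ (M + ((k : ℕ) + 1)) = (-1) ^ (M - ((k : ℕ) + 1)) := by
    rw [show M + ((k : ℕ) + 1) = M - ((k : ℕ) + 1) + 2 * ((k : ℕ) + 1) by omega, pow_add,
      pow_mul, neg_one_sq, one_pow, mul_one]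
  rw [Lagrange.nodalWeight, prod_inv_distrib, hprod, prod_erase_range_sub M k k.isLt, hsign,
    mul_assoc, mul_inv, div_eq_mul_inv, ← inv_pow, inv_neg, inv_one]

theorem coeff_nodal_erase_fin_add_one {M : ℕ} (hM : 3 ≤ M) (k : Fin M) :
    (Lagrange.nodal (univ.erase k) (fun j : Fin M => (j : ℚ) + 1)).coeff (M - 3) =
      ((M : ℚ) - 1) * (M : ℚ) * ((M : ℚ) + 1) * (3 * (M : ℚ) + 2) / 24
          - ((k : ℕ) + 1) * (M : ℚ) * ((M : ℚ) + 1) / 2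
          + (((k : ℕ) : ℚ) + 1) ^ 2 := by
  obtain ⟨t, rfl⟩ : ∃ t, M = t + 3 := ⟨M - 3, by omega⟩
  have hfactor : natNodal (t + 3) = Lagrange.nodal (univ.erase k)
      (fun j : Fin (t + 3) => (j : ℚ) + 1) * (X - C (((k : ℕ) : ℚ) + 1)) := by
    rw [← nodal_fin_add_one, Lagrange.nodal_eq_mul_nodal_erase (mem_univ k), mul_comm]
  set Q := Lagrange.nodal (univ.erase k) (fun j : Fin (t + 3) => (j : ℚ) + 1)
  have hlead : Q.coeff (t + 2) = 1 := by
    have hdeg : Q.natDegree = t + 2 := by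
      rw [Lagrange.natDegree_nodal, card_erase_of_mem (mem_univ k), Finset.card_univ,
        Fintype.card_fin]
      omega
    rw [← hdeg]
    exact Lagrange.nodal_monic.coeff_natDegree
  rw [Nat.add_sub_cancel, coeff_eq_of_eq_mul_X_sub_C hfactor, coeff_eq_of_eq_mul_X_sub_C hfactor,
    hlead, natNodal_coeff_sub_two, natNodal_coeff_sub_one (t + 2)]
  push_cast
  ring

/-- Row `M-2` of the inverse of the Vandermonde matrix `V_{j,n} = j^(n-1)`,
`j, n ∈ {1,…,M}` (indexed here by `Fin M`): with `n = k+1`,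
`A_{M-2,n} = (-1)^(M+n)/((n-1)!(M-n)!) *
  ((M-1)M(M+1)(3M+2)/24 - n·M(M+1)/2 + n²)`. -/
theorem inverse_vandermonde_row_M_sub_two (M : ℕ) (hM : 3 ≤ M) (k : Fin M) :
    (Matrix.of fun j n : Fin M => ((j : ℚ) + 1) ^ (n : ℕ))⁻¹
        ⟨M - 3, by omega⟩ k =
      (-1 : ℚ) ^ (M + ((k : ℕ) + 1)) /
          ((k : ℕ).factorial * (M - ((k : ℕ) + 1)).factorial) *
        (((M : ℚ) - 1) * (M : ℚ) * ((M : ℚ) + 1) * (3 * (M : ℚ) + 2) / 24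
          - ((k : ℕ) + 1) * (M : ℚ) * ((M : ℚ) + 1) / 2
          + (((k : ℕ) : ℚ) + 1) ^ 2) := by
  have hinj : Function.Injective (fun j : Fin M => (j : ℚ) + 1) :=
    (add_left_injective 1).comp (Nat.cast_injective.comp Fin.val_injective)
  change (Matrix.vandermonde fun j : Fin M => (j : ℚ) + 1)⁻¹ _ k = _
  rw [Matrix.inv_vandermonde_apply_s5 hinj, Lagrange.basis_eq_C_nodalWeight_mul_nodal_erase
    (mem_univ k), coeff_C_mul, nodalWeight_fin_add_one, coeff_nodal_erase_fin_add_one hM]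
end

section
/- For integers q, j with j - q ≥ q̃ + 1 ≥ 1, the sum over all strictly decreasing chains j > j_0 > j_1 > … > j_{q̃-1} > q (with j_{-1} = j, j_{q̃} = q) of the product Π_{l=0}^{q̃} C(j_{l-1} - 1, j_l - 1) equals C(j-1, q-1) * Σ_{l=1}^{q̃+1} l^(j-q) * (-1)^(q̃+1-l) * C(q̃+1, q̃+1-l). -/
/-!
Write `S_n(j)` for the sum over chains `j = f 0 > ⋯ > f n = q`. Peeling off the first step and
using `C(j-1, b-1) C(b-1, q-1) = C(j-1, q-1) C(j-q, b-q)` shows `S_n(j) = C(j-1, q-1) T_n(j-q)`,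
where `T_0(d) = 0^d` and `T_{n+1}(d) = ∑_{m<d} C(d, m) T_n(m)`. Since
`Δ(x ↦ x^d) = ∑_{m<d} C(d, m) x^m`, the iterated forward difference `Δ^n(x ↦ x^d)(0)` obeys the
same recursion, so it equals `T_n(d)`; expanding `Δ^(q̃+1)` as an alternating binomial sum gives
the right-hand side.
-/

open Finset Matrix fwdDiff

section ForwardDifference

variable {R : Type*} [CommRing R]

theorem fwdDiff_pow (n : ℕ) :
    Δ_[1] (fun r : R ↦ r ^ n) = ∑ m ∈ range n, n.choose m • fun r : R ↦ r ^ m := by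
  ext x
  simp [nsmul_eq_mul, fwdDiff, add_pow, sum_range_succ, mul_comm]

theorem fwdDiff_iter_succ_pow_apply (n k : ℕ) (y : R) :
    Δ_[1] ^[k + 1] (fun r : R ↦ r ^ n) y =
      ∑ m ∈ range n, n.choose m * Δ_[1] ^[k] (fun r : R ↦ r ^ m) y := by
  simp only [Function.iterate_succ_apply, fwdDiff_pow, fwdDiff_iter_finsetSum,
    fwdDiff_iter_const_smul, Finset.sum_apply, Pi.smul_apply]
  simp only [nsmul_eq_mul]

theorem fwdDiff_iter_pow_zero_eq_sum_Icc {n : ℕ} (hn : n ≠ 0) (k : ℕ) :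
    Δ_[1] ^[k] (fun r : R ↦ r ^ n) 0 =
      ∑ l ∈ Icc 1 k, (l : R) ^ n * (-1) ^ (k - l) * (k.choose (k - l) : R) := by
  rw [fwdDiff_iter_eq_sum_shift, range_eq_Ico, sum_eq_sum_Ico_succ_bot (by omega : 0 < k + 1),
    Ico_add_one_right_eq_Icc]
  simp only [zero_smul, zero_pow hn, smul_zero, zero_add, zsmul_eq_mul]
  refine sum_congr rfl fun l hl => ?_
  rw [Nat.choose_symm (mem_Icc.1 hl).2]
  push_cast
  ring

end ForwardDifference

def decreasingChains (N q n j : ℕ) : Finset (Fin (n + 1) → Fin (N + 1)) :=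
  univ.filter fun f => ((f 0 : ℕ) = j ∧ (f (Fin.last n) : ℕ) = q) ∧
    ∀ i k : Fin (n + 1), i < k → f k < f i

def chainWeight {N n : ℕ} (f : Fin (n + 1) → Fin (N + 1)) : ℤ :=
  ∏ l : Fin n, (((f l.castSucc : ℕ) - 1).choose ((f l.succ : ℕ) - 1) : ℤ)

section DecreasingChains

variable {N q n j : ℕ}

theorem mem_decreasingChains {f : Fin (n + 1) → Fin (N + 1)} :
    f ∈ decreasingChains N q n j ↔
      ((f 0 : ℕ) = j ∧ (f (Fin.last n) : ℕ) = q) ∧ StrictAnti f := by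
  simp only [decreasingChains, mem_filter, mem_univ, true_and]
  rfl

theorem le_of_mem_decreasingChains {f : Fin (n + 1) → Fin (N + 1)}
    (hf : f ∈ decreasingChains N q n j) : q ≤ j := by
  obtain ⟨⟨h0, hlast⟩, hanti⟩ := mem_decreasingChains.1 hf
  have : f (Fin.last n) ≤ f 0 := hanti.antitone (Fin.zero_le _)
  omega

theorem mem_decreasingChains_succ {f : Fin (n + 2) → Fin (N + 1)} :
    f ∈ decreasingChains N q (n + 1) j ↔
      (f 0 : ℕ) = j ∧ f 1 < f 0 ∧ vecTail f ∈ decreasingChains N q n (f 1) := by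
  rw [← cons_head_tail f]
  simp only [mem_decreasingChains, strictAnti_vecCons, cons_val_zero, cons_val_one, tail_cons,
    ← Fin.succ_last, cons_val_succ]
  tauto

theorem chainWeight_vecCons (a : Fin (N + 1)) (g : Fin (n + 1) → Fin (N + 1)) :
    chainWeight (vecCons a g) = (((a : ℕ) - 1).choose ((g 0 : ℕ) - 1) : ℤ) * chainWeight g := by
  simp only [chainWeight, Fin.prod_univ_succ, Fin.castSucc_zero,
    cons_val_zero, ← Fin.succ_castSucc, cons_val_succ]

theorem sum_decreasingChains_zero (hj : j ≤ N) :
    ∑ f ∈ decreasingChains N q 0 j, chainWeight f = if j = q then 1 else 0 := by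
  simp only [chainWeight, Finset.univ_eq_empty, prod_empty, sum_const, nsmul_one]
  split_ifs with hjq
  · subst hjq
    rw [show decreasingChains N j 0 j = {fun _ => ⟨j, by omega⟩} from ?_, card_singleton,
      Nat.cast_one]
    ext f
    simp [mem_decreasingChains, funext_iff, Fin.forall_fin_one, Fin.ext_iff,
      Subsingleton.strictAnti]
  · rw [card_eq_zero.2 (eq_empty_of_forall_notMem fun f hf => hjq ?_), Nat.cast_zero]
    obtain ⟨⟨h0, hlast⟩, -⟩ := mem_decreasingChains.1 hf
    exact h0.symm.trans hlast

theorem sum_decreasingChains_succ (hj : j ≤ N) :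
    ∑ f ∈ decreasingChains N q (n + 1) j, chainWeight f =
      ∑ j₀ ∈ Ico q j, ((j - 1).choose (j₀ - 1) : ℤ) *
        ∑ g ∈ decreasingChains N q n j₀, chainWeight g := by
  simp only [mul_sum]
  rw [sum_sigma']
  refine sum_nbij' (fun f => ⟨f 1, vecTail f⟩) (fun p => vecCons ⟨j, by omega⟩ p.2)
    ?_ ?_ ?_ ?_ ?_
  · intro f hf
    obtain ⟨h0, h1, htail⟩ := mem_decreasingChains_succ.1 hf
    simp only [mem_sigma, mem_Ico]
    exact ⟨⟨le_of_mem_decreasingChains htail, by omega⟩, htail⟩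
  · rintro ⟨j₀, g⟩ hg
    simp only [mem_sigma, mem_Ico] at hg
    obtain ⟨⟨-, hj₀⟩, hg⟩ := hg
    have hg0 : (g 0 : ℕ) = j₀ := (mem_decreasingChains.1 hg).1.1
    refine mem_decreasingChains_succ.2 ⟨rfl, ?_, ?_⟩ <;>
      simpa only [cons_val_one, tail_cons, Fin.lt_def, hg0]
  · intro f hf
    conv_rhs => rw [← cons_head_tail f]
    exact congrArg₂ vecCons (Fin.ext (mem_decreasingChains_succ.1 hf).1.symm) rfl
  · rintro ⟨j₀, g⟩ hg
    simp only [mem_sigma] at hg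
    simp only [cons_val_one, tail_cons, (mem_decreasingChains.1 hg.2).1.1]
  · intro f hf
    conv_lhs =>
      rw [← cons_head_tail f, chainWeight_vecCons, vecHead, (mem_decreasingChains_succ.1 hf).1]
    rfl

theorem sum_decreasingChains_eq (hq : 1 ≤ q) (n : ℕ) {j : ℕ} (hqj : q ≤ j) (hj : j ≤ N) :
    ∑ f ∈ decreasingChains N q n j, chainWeight f =
      (j - 1).choose (q - 1) * Δ_[1] ^[n] (fun r : ℤ ↦ r ^ (j - q)) 0 := by
  induction n generalizing j with
  | zero =>
    rw [sum_decreasingChains_zero hj, Function.iterate_zero_apply]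
    split_ifs with hjq
    · simp [hjq]
    · simp [zero_pow (show j - q ≠ 0 by omega)]
  | succ n ih =>
    rw [sum_decreasingChains_succ hj, fwdDiff_iter_succ_pow_apply, mul_sum, sum_Ico_eq_sum_range]
    refine sum_congr rfl fun m hm => ?_
    rw [mem_range] at hm
    have hchoose : (j - 1).choose (q + m - 1) * (q + m - 1).choose (q - 1) =
        (j - 1).choose (q - 1) * (j - q).choose m := by
      rw [Nat.choose_mul (by omega), show j - 1 - (q - 1) = j - q by omega,
        show q + m - 1 - (q - 1) = m by omega]
    rw [ih (by omega) (by omega), Nat.add_sub_cancel_left, ← mul_assoc, ← Nat.cast_mul, hchoose]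
    push_cast
    ring

end DecreasingChains

/-- Sum over strictly decreasing chains `j > j₀ > j₁ > … > j_{q̃-1} > q`
(with `j₋₁ = j`, `j_{q̃} = q`) of the product `Π_{l=0}^{q̃} C(j_{l-1}-1, j_l-1)`:
it equals `C(j-1, q-1) * Σ_{l=1}^{q̃+1} l^(j-q) * (-1)^(q̃+1-l) * C(q̃+1, q̃+1-l)`.
Chains are encoded as functions `f : Fin (q̃+2) → Fin (j+1)` with `f 0 = j`,
`f (last) = q`, strictly decreasing. -/
theorem sum_over_simplex_IV (q j qt : ℕ) (hq : 1 ≤ q) (h : qt + 1 ≤ j - q) :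
    ∑ f ∈ Finset.univ.filter
        (fun f : Fin (qt + 2) → Fin (j + 1) =>
          ((f 0 : ℕ) = j ∧ (f (Fin.last (qt + 1)) : ℕ) = q) ∧
            ∀ i k : Fin (qt + 2), i < k → f k < f i),
      ∏ l : Fin (qt + 1),
        ((Nat.choose ((f l.castSucc : ℕ) - 1) ((f l.succ : ℕ) - 1) : ℤ)) =
    (Nat.choose (j - 1) (q - 1) : ℤ) *
      ∑ l ∈ Finset.Icc 1 (qt + 1),
        (l : ℤ) ^ (j - q) * (-1) ^ (qt + 1 - l) *
          (Nat.choose (qt + 1) (qt + 1 - l) : ℤ) := by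
  rw [← fwdDiff_iter_pow_zero_eq_sum_Icc (show j - q ≠ 0 by omega)]
  exact sum_decreasingChains_eq hq (qt + 1) (by omega) le_rfl
end

section
/- For every s ≥ 1, the sum over pairs 1 ≤ j_1 < j_2 ≤ s of the product ( (2j_1 - 1)!!/(2j_1 - 2)!! ) * ( (2j_2 - 2)!!/(2j_2 - 3)!! ) equals s(s-1)(4s+1)/9. -/
/-!
Exchanging the two sums, the inner sum for `j₂ = n + 1` becomes the partial sum
`∑_{i ≤ n} (2i-1)‼/(2i-2)‼`, which telescopes to `2n (2n+1)‼ / (3 (2n)‼)`. Multiplied by the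
outer factor `(2n)‼/(2n-1)‼`, the double factorials cancel to the polynomial `2n(2n+1)/3`, whose sum is the claimed cubic.
-/

open Nat Finset

theorem Finset.sum_Icc_sum_Icc_add_one_comm {M : Type*} [AddCommMonoid M]
    (f : ℕ → ℕ → M) (a s : ℕ) :
    ∑ i ∈ Icc a s, ∑ j ∈ Icc (i + 1) s, f i j = ∑ j ∈ Icc a s, ∑ i ∈ Ico a j, f i j :=
  Finset.sum_comm' fun i j => by simp only [mem_Icc, mem_Ico]; omega

theorem sum_Icc_doubleFactorial_ratio (n : ℕ) :
    ∑ i ∈ Icc 1 n, ((2 * i - 1)‼ : ℚ) / (2 * i - 2)‼ =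
      2 * n * (2 * n + 1)‼ / (3 * (2 * n)‼) := by
  induction n with
  | zero => simp
  | succ n ih =>
    rw [sum_Icc_succ_top (by omega), ih,
      show 2 * (n + 1) - 1 = 2 * n + 1 by omega, show 2 * (n + 1) - 2 = 2 * n by omega,
      show 2 * (n + 1) + 1 = 2 * n + 1 + 2 by omega, show 2 * (n + 1) = 2 * n + 2 by omega,
      doubleFactorial_add_two, doubleFactorial_add_two]
    have : ((2 * n)‼ : ℚ) ≠ 0 := by positivity
    push_cast
    field_simp
    ring

theorem sum_Ico_doubleFactorial_ratio_mul (j : ℕ) (hj : 1 ≤ j) :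
    (∑ i ∈ Ico 1 j, ((2 * i - 1)‼ : ℚ) / (2 * i - 2)‼) * ((2 * j - 2)‼ / (2 * j - 3)‼) =
      2 * ((j : ℚ) - 1) * (2 * j - 1) / 3 := by
  obtain ⟨n, rfl⟩ : ∃ n, j = n + 1 := ⟨j - 1, by omega⟩
  rw [Ico_add_one_right_eq_Icc, sum_Icc_doubleFactorial_ratio,
    show 2 * (n + 1) - 2 = 2 * n by omega, show 2 * (n + 1) - 3 = 2 * n - 1 by omega,
    doubleFactorial_add_one]
  have : ((2 * n)‼ : ℚ) ≠ 0 := by positivity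
  have : ((2 * n - 1)‼ : ℚ) ≠ 0 := by positivity
  push_cast
  field_simp
  ring

theorem sum_Icc_bulk_polynomial (s : ℕ) :
    ∑ j ∈ Icc 1 s, 2 * ((j : ℚ) - 1) * (2 * j - 1) / 3 = s * ((s : ℚ) - 1) * (4 * s + 1) / 9 := by
  induction s with
  | zero => simp
  | succ s ih =>
    rw [sum_Icc_succ_top (by omega), ih]
    push_cast
    ring

theorem simplex_bulk_two_general (s : ℕ) :
    ∑ j1 ∈ Finset.Icc 1 s, ∑ j2 ∈ Finset.Icc (j1 + 1) s,
        (((2 * j1 - 1)‼ : ℚ) / ((2 * j1 - 2)‼ : ℚ)) *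
          (((2 * j2 - 2)‼ : ℚ) / ((2 * j2 - 3)‼ : ℚ)) =
      (s : ℚ) * ((s : ℚ) - 1) * (4 * (s : ℚ) + 1) / 9 := by
  rw [sum_Icc_sum_Icc_add_one_comm, ← sum_Icc_bulk_polynomial]
  refine sum_congr rfl fun j hj => ?_
  rw [← sum_mul, sum_Ico_doubleFactorial_ratio_mul j (mem_Icc.mp hj).1]

/-- Sum over the bulk of a 2-dimensional simplex:
`Σ_{1≤j₁<j₂≤s} ((2j₁-1)!!/(2j₁-2)!!) * ((2j₂-2)!!/(2j₂-3)!!) = s(s-1)(4s+1)/9`. -/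
theorem simplex_bulk_two (s : ℕ) (hs : 1 ≤ s) :
    ∑ j1 ∈ Finset.Icc 1 s, ∑ j2 ∈ Finset.Icc (j1 + 1) s,
        (((2 * j1 - 1)‼ : ℚ) / ((2 * j1 - 2)‼ : ℚ)) *
          (((2 * j2 - 2)‼ : ℚ) / ((2 * j2 - 3)‼ : ℚ)) =
      (s : ℚ) * ((s : ℚ) - 1) * (4 * (s : ℚ) + 1) / 9 :=
  simplex_bulk_two_general s
end

section
/- For every s ≥ 3, the sum over quadruples 1 ≤ j_1 < j_2 < j_3 < j_4 ≤ s of Π_{p=1}^{4} (2j_p - p)!!/(2j_p - (p+1))!! equals (s-1)(s-2)(s-3)(80 s^3 - 120 s^2 + 7 s + 12)/2430. -/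
/-!
Peeling off the largest index gives the recursion
`S^(k+1)(s+1) = S^(k+1)(s) + S^(k)(s) · r(2s + 1 - k)` with `r(n) = n‼ / (n-1)‼`.
Since `r(n) r(n+1) = n + 1` and `r(n+2) = (n+2)/(n+1) · r(n)`, the odd levels `S^(1)`, `S^(3)` are
polynomial multiples of `r(2s-1)`, `r(2s-3)`, while in the even levels `S^(2)`, `S^(4)` the ratios
telescope into polynomials; each closed form then follows from the previous one by induction on `s`.
-/

open Nat Finset

namespace SimplexBulk

section ChainSum

variable {R : Type*} [Semiring R] (F : ℕ → ℕ → R)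

/-- `chainSum F k p a s` is the sum over `a < j₀ < j₁ < ⋯ < j_{k-1} ≤ s` of
`F p j₀ * F (p + 1) j₁ * ⋯ * F (p + k - 1) j_{k-1}`. -/
def chainSum : ℕ → ℕ → ℕ → ℕ → R
  | 0, _, _, _ => 1
  | k + 1, p, a, s => ∑ j ∈ Icc (a + 1) s, F p j * chainSum k (p + 1) j s

theorem chainSum_eq_zero {k p a s : ℕ} (h : s < a + k + 1) : chainSum F (k + 1) p a s = 0 := by
  induction k generalizing p a with
  | zero => simp [chainSum, Icc_eq_empty_of_lt (show s < a + 1 by omega)]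
  | succ k ih =>
    refine sum_eq_zero fun j hj => ?_
    rw [ih (by simp only [mem_Icc] at hj; omega), mul_zero]

theorem chainSum_succ_succ (k p : ℕ) {a s : ℕ} (h : a ≤ s) :
    chainSum F (k + 1) p a (s + 1) =
      chainSum F (k + 1) p a s + chainSum F k p a s * F (p + k) (s + 1) := by
  induction k generalizing p a with
  | zero => simp [chainSum, sum_Icc_succ_top (show a + 1 ≤ s + 1 by omega)]
  | succ k ih =>
    have hlast : chainSum F (k + 1) (p + 1) (s + 1) (s + 1) = 0 := chainSum_eq_zero F (by omega)
    rw [chainSum, sum_Icc_succ_top (by omega), hlast, mul_zero, add_zero, chainSum, chainSum,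
      sum_mul, ← sum_add_distrib]
    refine sum_congr rfl fun j hj => ?_
    rw [ih (p + 1) (by simp only [mem_Icc] at hj; omega), mul_add, mul_assoc,
      show p + 1 + k = p + (k + 1) by omega]

end ChainSum

/-- `0 - 1 = 0` in `ℕ` gives `dfRatio 0 = 1`, which makes the identities below hold for all `n`. -/
noncomputable def dfRatio (n : ℕ) : ℚ := (n‼ : ℚ) / ((n - 1)‼ : ℚ)

theorem dfRatio_one : dfRatio 1 = 1 := by norm_num [dfRatio]

theorem dfRatio_mul_dfRatio_succ (n : ℕ) : dfRatio n * dfRatio (n + 1) = n + 1 := by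
  have h₀ : (n‼ : ℚ) ≠ 0 := by exact_mod_cast (doubleFactorial_pos n).ne'
  have h₁ : ((n - 1)‼ : ℚ) ≠ 0 := by exact_mod_cast (doubleFactorial_pos _).ne'
  rw [dfRatio, dfRatio, Nat.add_sub_cancel, doubleFactorial_add_one]
  push_cast
  field_simp

theorem dfRatio_add_two (n : ℕ) : dfRatio (n + 2) = (n + 2) / (n + 1) * dfRatio n := by
  have h₁ : ((n - 1)‼ : ℚ) ≠ 0 := by exact_mod_cast (doubleFactorial_pos _).ne'
  rw [dfRatio, dfRatio, show n + 2 - 1 = n + 1 by omega, doubleFactorial_add_two,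
    doubleFactorial_add_one]
  push_cast
  field_simp

/-- The paper's `S^(k)(s)`. -/
noncomputable def bulkSum (k s : ℕ) : ℚ := chainSum (fun p j => dfRatio (2 * j - p)) k 1 0 s

theorem bulkSum_succ_succ (k s : ℕ) :
    bulkSum (k + 1) (s + 1) = bulkSum (k + 1) s + bulkSum k s * dfRatio (2 * s + 1 - k) := by
  rw [bulkSum, chainSum_succ_succ _ _ _ (Nat.zero_le s),
    show 2 * (s + 1) - (1 + k) = 2 * s + 1 - k by omega]
  rfl

theorem bulkSum_zero (s : ℕ) : bulkSum 0 s = 1 := rfl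

theorem bulkSum_eq_zero {k s : ℕ} (h : s < k + 1) : bulkSum (k + 1) s = 0 :=
  chainSum_eq_zero _ (by omega)

theorem bulkSum_one (m : ℕ) : bulkSum 1 (m + 1) = (2 * m + 3) / 3 * dfRatio (2 * m + 1) := by
  induction m with
  | zero => norm_num [bulkSum_succ_succ, bulkSum_eq_zero, bulkSum_zero, dfRatio_one]
  | succ m ih =>
    rw [bulkSum_succ_succ, ih, bulkSum_zero, Nat.sub_zero,
      show 2 * (m + 1) + 1 = 2 * m + 1 + 2 by omega, dfRatio_add_two]
    push_cast
    field_simp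
    ring

theorem bulkSum_two (s : ℕ) : bulkSum 2 s = (4 * s ^ 3 - 3 * s ^ 2 - s) / 9 := by
  induction s with
  | zero => simp [bulkSum_eq_zero]
  | succ s ih =>
    rw [bulkSum_succ_succ, ih]
    rcases s with _ | m
    · norm_num [bulkSum_eq_zero]
    · rw [bulkSum_one, mul_assoc, show 2 * (m + 1) + 1 - 1 = 2 * m + 1 + 1 by omega,
        dfRatio_mul_dfRatio_succ]
      push_cast
      ring

theorem bulkSum_three (m : ℕ) :
    bulkSum 3 (m + 2) =
      (40 * (m + 2) ^ 4 - 110 * (m + 2) ^ 3 + 59 * (m + 2) ^ 2 + 5 * (m + 2) - 6) / 405 *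
        dfRatio (2 * m + 1) := by
  induction m with
  | zero => norm_num [bulkSum_eq_zero]
  | succ m ih =>
    rw [bulkSum_succ_succ, ih, bulkSum_two, show 2 * (m + 2) + 1 - 2 = 2 * m + 1 + 2 by omega,
      show 2 * (m + 1) + 1 = 2 * m + 1 + 2 by omega, dfRatio_add_two]
    push_cast
    field_simp
    ring

theorem bulkSum_four (m : ℕ) :
    bulkSum 4 (m + 2) =
      ((m + 2) - 1) * ((m + 2) - 2) * ((m + 2) - 3) *
        (80 * (m + 2) ^ 3 - 120 * (m + 2) ^ 2 + 7 * (m + 2) + 12) / 2430 := by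
  induction m with
  | zero => norm_num [bulkSum_eq_zero]
  | succ m ih =>
    rw [bulkSum_succ_succ, ih, bulkSum_three, show 2 * (m + 2) + 1 - 3 = 2 * m + 1 + 1 by omega,
      mul_assoc _ (dfRatio _), dfRatio_mul_dfRatio_succ]
    push_cast
    ring

end SimplexBulk

open SimplexBulk in
/-- Sum over the bulk of a 4-dimensional simplex:
`Σ_{1≤j₁<j₂<j₃<j₄≤s} Π_{p=1}^{4} (2j_p - p)!!/(2j_p - (p+1))!!
  = (s-1)(s-2)(s-3)(80s³ - 120s² + 7s + 12)/2430`. -/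
theorem simplex_bulk_four (s : ℕ) (hs : 3 ≤ s) :
    ∑ j1 ∈ Finset.Icc 1 s, ∑ j2 ∈ Finset.Icc (j1 + 1) s,
      ∑ j3 ∈ Finset.Icc (j2 + 1) s, ∑ j4 ∈ Finset.Icc (j3 + 1) s,
        (((2 * j1 - 1)‼ : ℚ) / ((2 * j1 - 2)‼ : ℚ)) *
          (((2 * j2 - 2)‼ : ℚ) / ((2 * j2 - 3)‼ : ℚ)) *
          (((2 * j3 - 3)‼ : ℚ) / ((2 * j3 - 4)‼ : ℚ)) *
          (((2 * j4 - 4)‼ : ℚ) / ((2 * j4 - 5)‼ : ℚ)) =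
      ((s : ℚ) - 1) * ((s : ℚ) - 2) * ((s : ℚ) - 3) *
        (80 * (s : ℚ) ^ 3 - 120 * (s : ℚ) ^ 2 + 7 * (s : ℚ) + 12) / 2430 := by
  obtain ⟨m, rfl⟩ := Nat.exists_eq_add_of_le' (show 2 ≤ s by omega)
  have h := bulkSum_four m
  simp only [bulkSum, chainSum, dfRatio, mul_sum, mul_one, Nat.sub_sub] at h
  push_cast
  simpa only [mul_assoc] using h
end

section
/- For every s ≥ 2, the sum over triples 1 ≤ j_1 < j_2 < j_3 ≤ s of Π_{p=1}^{3} (2j_p - p)!!/(2j_p - (p+1))!! equals (1/405) * ((2s-1)!!/(2s-4)!!) * (s-2)(20 s^2 - 5s - 3). -/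
/-!
Peeling off the largest index, each nested sum grows by the previous one times a single factor.
With the Wallis ratio `c s = (2s-1)‼/(2s)‼`, the one- and three-fold sums are polynomial
multiples of `c s`, and the two-fold sum is a plain polynomial, since its increment is the
one-fold sum times `(2s)‼/(2s-1)‼ = 1 / c s`. In this form the closed forms hold for every `s`,
so they can be checked by induction; the stated formula follows from
`(2s)‼ = 2s (2s-2) (2s-4)‼` for `s ≥ 2`.
-/

open Nat Finset

namespace SimplexBulk

theorem sum_Icc_add_one_top_of_eq_zero {M : Type*} [AddCommMonoid M] {a s : ℕ} {g : ℕ → M}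
    (h : g (s + 1) = 0) : ∑ i ∈ Icc a (s + 1), g i = ∑ i ∈ Icc a s, g i := by
  refine (sum_subset (Icc_subset_Icc_right s.le_succ) fun i hi hi' => ?_).symm
  simp only [mem_Icc] at hi hi'
  rwa [show i = s + 1 by omega]

theorem sum_Icc_sum_Icc_add_one_top {M : Type*} [AddCommMonoid M] (a s : ℕ) (f : ℕ → ℕ → M) :
    ∑ i ∈ Icc a (s + 1), ∑ j ∈ Icc (i + 1) (s + 1), f i j =
      ∑ i ∈ Icc a s, ∑ j ∈ Icc (i + 1) s, f i j + ∑ i ∈ Icc a s, f i (s + 1) := by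
  rw [sum_Icc_add_one_top_of_eq_zero (by simp), ← sum_add_distrib]
  refine sum_congr rfl fun i hi => sum_Icc_succ_top ?_ _
  simp only [mem_Icc] at hi
  omega

theorem sum_Icc_sum_Icc_sum_Icc_add_one_top {M : Type*} [AddCommMonoid M] (a s : ℕ)
    (f : ℕ → ℕ → ℕ → M) :
    ∑ i ∈ Icc a (s + 1), ∑ j ∈ Icc (i + 1) (s + 1), ∑ k ∈ Icc (j + 1) (s + 1), f i j k =
      ∑ i ∈ Icc a s, ∑ j ∈ Icc (i + 1) s, ∑ k ∈ Icc (j + 1) s, f i j k +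
        ∑ i ∈ Icc a s, ∑ j ∈ Icc (i + 1) s, f i j (s + 1) := by
  simp_rw [fun i => sum_Icc_sum_Icc_add_one_top (i + 1) s (f i)]
  rw [sum_Icc_add_one_top_of_eq_zero (by simp), sum_add_distrib]

theorem cast_doubleFactorial_ne_zero (n : ℕ) : (n‼ : ℚ) ≠ 0 :=
  mod_cast (doubleFactorial_pos n).ne'

def wallisRatio (s : ℕ) : ℚ := (2 * s - 1)‼ / (2 * s)‼

theorem wallisRatio_ne_zero (s : ℕ) : wallisRatio s ≠ 0 :=
  div_ne_zero (cast_doubleFactorial_ne_zero _) (cast_doubleFactorial_ne_zero _)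

theorem wallisRatio_succ (s : ℕ) :
    wallisRatio (s + 1) = (2 * s + 1) / (2 * s + 2) * wallisRatio s := by
  have hodd : ((2 * (s + 1) - 1)‼ : ℚ) = (2 * s + 1) * (2 * s - 1)‼ := by
    rw [show 2 * (s + 1) - 1 = 2 * s + 1 by omega]
    exact_mod_cast doubleFactorial_add_one (2 * s)
  have heven : ((2 * (s + 1))‼ : ℚ) = (2 * s + 2) * (2 * s)‼ := by
    exact_mod_cast doubleFactorial_add_two (2 * s)
  rw [wallisRatio, wallisRatio, hodd, heven, mul_div_mul_comm]

theorem doubleFactorial_odd_div_even (s : ℕ) :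
    ((2 * (s + 1) - 1)‼ : ℚ) / (2 * (s + 1) - 2)‼ = (2 * s + 2) * wallisRatio (s + 1) := by
  have heven : ((2 * (s + 1))‼ : ℚ) = (2 * s + 2) * (2 * (s + 1) - 2)‼ := by
    rw [show 2 * (s + 1) - 2 = 2 * s by omega]
    exact_mod_cast doubleFactorial_add_two (2 * s)
  have := cast_doubleFactorial_ne_zero (2 * (s + 1) - 2)
  rw [wallisRatio, heven]
  field_simp

theorem doubleFactorial_even_div_odd (s : ℕ) :
    ((2 * (s + 1) - 2)‼ : ℚ) / (2 * (s + 1) - 3)‼ = (wallisRatio s)⁻¹ := by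
  rw [wallisRatio, inv_div, show 2 * (s + 1) - 2 = 2 * s by omega,
    show 2 * (s + 1) - 3 = 2 * s - 1 by omega]

theorem sum_one (s : ℕ) :
    ∑ j ∈ Icc 1 s, ((2 * j - 1)‼ : ℚ) / (2 * j - 2)‼ = 2 * s * (2 * s + 1) / 3 * wallisRatio s := by
  induction s with
  | zero => simp
  | succ s ih =>
    rw [sum_Icc_succ_top (by omega), ih, doubleFactorial_odd_div_even, wallisRatio_succ]
    push_cast
    field_simp
    ring

theorem sum_two (s : ℕ) :
    ∑ j1 ∈ Icc 1 s, ∑ j2 ∈ Icc (j1 + 1) s,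
        ((2 * j1 - 1)‼ : ℚ) / (2 * j1 - 2)‼ * ((2 * j2 - 2)‼ / (2 * j2 - 3)‼) =
      s * (s - 1) * (4 * s + 1) / 9 := by
  induction s with
  | zero => simp
  | succ s ih =>
    rw [sum_Icc_sum_Icc_add_one_top, ih, ← sum_mul, sum_one, doubleFactorial_even_div_odd]
    have := wallisRatio_ne_zero s
    push_cast
    field_simp
    ring

theorem sum_three (s : ℕ) :
    ∑ j1 ∈ Icc 1 s, ∑ j2 ∈ Icc (j1 + 1) s, ∑ j3 ∈ Icc (j2 + 1) s,
        ((2 * j1 - 1)‼ : ℚ) / (2 * j1 - 2)‼ * ((2 * j2 - 2)‼ / (2 * j2 - 3)‼) *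
          ((2 * j3 - 3)‼ / (2 * j3 - 4)‼) =
      4 * s * (s - 1) * (s - 2) * (20 * s ^ 2 - 5 * s - 3) / 405 * wallisRatio s := by
  induction s with
  | zero => simp
  | succ s ih =>
    rw [sum_Icc_sum_Icc_sum_Icc_add_one_top, ih]
    simp_rw [← sum_mul]
    rw [sum_two]
    obtain _ | t := s
    · simp
    rw [show 2 * (t + 1 + 1) - 3 = 2 * (t + 1) - 1 by omega,
      show 2 * (t + 1 + 1) - 4 = 2 * (t + 1) - 2 by omega, doubleFactorial_odd_div_even,
      wallisRatio_succ (t + 1)]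
    have := wallisRatio_ne_zero (t + 1)
    push_cast
    field_simp
    ring

end SimplexBulk

/-- Sum over the bulk of a 3-dimensional simplex:
`Σ_{1≤j₁<j₂<j₃≤s} Π_{p=1}^{3} (2j_p - p)!!/(2j_p - (p+1))!!
  = (1/405) * ((2s-1)!!/(2s-4)!!) * (s-2)(20s² - 5s - 3)`. -/
theorem simplex_bulk_three (s : ℕ) (hs : 2 ≤ s) :
    ∑ j1 ∈ Finset.Icc 1 s, ∑ j2 ∈ Finset.Icc (j1 + 1) s,
      ∑ j3 ∈ Finset.Icc (j2 + 1) s,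
        (((2 * j1 - 1)‼ : ℚ) / ((2 * j1 - 2)‼ : ℚ)) *
          (((2 * j2 - 2)‼ : ℚ) / ((2 * j2 - 3)‼ : ℚ)) *
          (((2 * j3 - 3)‼ : ℚ) / ((2 * j3 - 4)‼ : ℚ)) =
      (1 / 405 : ℚ) * (((2 * s - 1)‼ : ℚ) / ((2 * s - 4)‼ : ℚ)) *
        (((s : ℚ) - 2) * (20 * (s : ℚ) ^ 2 - 5 * (s : ℚ) - 3)) := by
  rw [SimplexBulk.sum_three, SimplexBulk.wallisRatio]
  obtain ⟨n, rfl⟩ := Nat.exists_eq_add_of_le' hs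
  have heven : ((2 * (n + 2))‼ : ℚ) = (2 * n + 4) * (2 * n + 2) * (2 * (n + 2) - 4)‼ := by
    rw [show 2 * (n + 2) - 4 = 2 * n by omega, show 2 * (n + 2) = 2 * n + 2 + 2 by omega]
    push_cast [doubleFactorial_add_two]
    ring
  have := SimplexBulk.cast_doubleFactorial_ne_zero (2 * (n + 2) - 4)
  rw [heven]
  push_cast
  field_simp
  ring
end
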